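/- Every integer n has a unique representation n = Σ_{i≥0} εᵢ 3ⁱ with εᵢ ∈ {0, ±1} and finitely many εᵢ nonzero, and the word length ℓ₃(n) with respect to A₃ = {0} ∪ {±3ⁱ : i ≥ 0} equals Σ_{i≥0} |εᵢ|. -/

import Mathlib

def Ag (g : ℤ) : Set ℤ := {0} ∪ {x | ∃ i : ℕ, x = g ^ i ∨ x = -g ^ i}

noncomputable def lg (g : ℤ) (n : ℤ) : ℕ :=
  sInf {h | ∃ l : List ℤ, (∀ a ∈ l, a ∈ Ag g) ∧ l.sum = n ∧ l.length = h}

/-!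
Writing `n = 3q + d` with `d ∈ {0, ±1}` determines `d` (it is fixed by `n mod 3`) and `q`, and
`|q| < |n|` for `n ≠ 0`; iterating gives existence and uniqueness of the balanced ternary digits.
Their weight `w(n) = Σ |εᵢ|` satisfies `w(3q + d) = |d| + w(q)`. A sum of `w(n)` signed powers of
three realises `n`, so `ℓ₃(n) ≤ w(n)`. Conversely `w(n ± 3ⁱ) ≤ w(n) + 1`: for `i = 0` this is a
digit change with at most one carry, and for `i > 0` it reduces to `q ± 3ⁱ⁻¹`; hence `w(n) ≤ ℓ₃(n)`.
-/

open Function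

section WordLength

variable {g : ℤ}

lemma one_mem_Ag : (1 : ℤ) ∈ Ag g := Or.inr ⟨0, Or.inl (pow_zero g).symm⟩

lemma neg_one_mem_Ag : (-1 : ℤ) ∈ Ag g := Or.inr ⟨0, Or.inr (by rw [pow_zero])⟩

lemma mul_mem_Ag {a : ℤ} (ha : a ∈ Ag g) : g * a ∈ Ag g := by
  rcases ha with rfl | ⟨i, rfl | rfl⟩
  · exact Or.inl (mul_zero g)
  · exact Or.inr ⟨i + 1, Or.inl (pow_succ' g i).symm⟩
  · exact Or.inr ⟨i + 1, Or.inr (by rw [pow_succ']; ring)⟩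

lemma lg_le_length {l : List ℤ} (hl : ∀ a ∈ l, a ∈ Ag g) : lg g l.sum ≤ l.length :=
  Nat.sInf_le ⟨l, hl, rfl, rfl⟩

lemma exists_list_Ag_sum_eq_length_eq_natAbs (n : ℤ) :
    ∃ l : List ℤ, (∀ a ∈ l, a ∈ Ag g) ∧ l.sum = n ∧ l.length = n.natAbs := by
  refine ⟨List.replicate n.natAbs n.sign, ?_, ?_, List.length_replicate⟩
  · intro a ha
    rw [List.eq_of_mem_replicate ha]
    rcases n.sign_trichotomy with h | h | h <;> rw [h]
    exacts [one_mem_Ag, Or.inl rfl, neg_one_mem_Ag]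
  · rw [List.sum_replicate, nsmul_eq_mul, mul_comm, Int.sign_mul_natAbs]

lemma lg_le_natAbs (n : ℤ) : lg g n ≤ n.natAbs := by
  obtain ⟨l, hl, rfl, hlen⟩ := exists_list_Ag_sum_eq_length_eq_natAbs (g := g) n
  exact hlen ▸ lg_le_length hl

lemma exists_list_Ag_sum_eq_length_eq_lg (n : ℤ) :
    ∃ l : List ℤ, (∀ a ∈ l, a ∈ Ag g) ∧ l.sum = n ∧ l.length = lg g n := by
  obtain ⟨l, hl, hsum, -⟩ := exists_list_Ag_sum_eq_length_eq_natAbs (g := g) n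
  exact Nat.sInf_mem (s := {h | ∃ l : List ℤ, (∀ a ∈ l, a ∈ Ag g) ∧ l.sum = n ∧ l.length = h})
    ⟨l.length, l, hl, hsum, rfl⟩

lemma lg_add_le (a b : ℤ) : lg g (a + b) ≤ lg g a + lg g b := by
  obtain ⟨l₁, hl₁, rfl, hlen₁⟩ := exists_list_Ag_sum_eq_length_eq_lg (g := g) a
  obtain ⟨l₂, hl₂, rfl, hlen₂⟩ := exists_list_Ag_sum_eq_length_eq_lg (g := g) b
  have hl : ∀ a ∈ l₁ ++ l₂, a ∈ Ag g := fun a ha =>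
    (List.mem_append.1 ha).elim (hl₁ a) (hl₂ a)
  have h := lg_le_length hl
  rwa [List.sum_append, List.length_append, hlen₁, hlen₂] at h

lemma lg_mul_le (a : ℤ) : lg g (g * a) ≤ lg g a := by
  obtain ⟨l, hl, rfl, hlen⟩ := exists_list_Ag_sum_eq_length_eq_lg (g := g) a
  have h := lg_le_length (l := l.map (g * ·)) (by
    simpa only [List.mem_map, forall_exists_index, and_imp, forall_apply_eq_imp_iff₂] using
      fun a ha => mul_mem_Ag (hl a ha))
  rwa [List.sum_map_mul_left, List.map_id', List.length_map, hlen] at h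

end WordLength

lemma finsum_nat_eq_zero_add {M : Type*} [AddCommMonoid M] {f : ℕ → M} (hf : (support f).Finite) :
    ∑ᶠ i, f i = f 0 + ∑ᶠ i, f (i + 1) := by
  obtain ⟨N, hN⟩ := hf.bddAbove
  rw [finsum_eq_sum_of_support_subset f (s := Finset.range (N + 2)), Finset.sum_range_succ',
    finsum_eq_sum_of_support_subset (fun i => f (i + 1)) (s := Finset.range (N + 1)), add_comm]
  · intro i hi
    have := hN (show i + 1 ∈ support f from hi)
    simp only [Finset.coe_range, Set.mem_Iio]
    omega
  · intro i hi
    have := hN hi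
    simp only [Finset.coe_range, Set.mem_Iio]
    omega

lemma finite_support_comp_add_one {M : Type*} [Zero M] {f : ℕ → M} (hf : (support f).Finite) :
    (support fun i => f (i + 1)).Finite :=
  hf.preimage (add_left_injective 1).injOn

lemma finsum_mul_pow_eq_add_mul {R : Type*} [CommSemiring R] {ε : ℕ → R} (b : R)
    (hε : (support ε).Finite) :
    ∑ᶠ i, ε i * b ^ i = ε 0 + b * ∑ᶠ i, ε (i + 1) * b ^ i := by
  rw [finsum_nat_eq_zero_add (hε.subset (support_mul_subset_left _ _)), pow_zero, mul_one,
    mul_finsum' _ _ ((finite_support_comp_add_one hε).subset (support_mul_subset_left _ _))]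
  simp only [pow_succ', mul_left_comm]

lemma exists_eq_three_mul_add (n : ℤ) : ∃ q d : ℤ, |d| ≤ 1 ∧ n = 3 * q + d :=
  ⟨(n + 1) / 3, (n + 1) % 3 - 1, by rw [abs_le]; omega, by omega⟩

theorem balanced_ternary_induction {P : ℤ → Prop} (zero : P 0)
    (step : ∀ q d : ℤ, |d| ≤ 1 → P q → P (3 * q + d)) (n : ℤ) : P n := by
  induction hk : n.natAbs using Nat.strong_induction_on generalizing n with
  | _ k ih =>
  obtain rfl | hn := eq_or_ne n 0
  · exact zero
  obtain ⟨q, d, hd, rfl⟩ := exists_eq_three_mul_add n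
  have hd' := abs_le.1 hd
  exact step q d hd (ih _ (by omega) q rfl)

-- `(n + 1) % 3 - 1` is the representative of `n` mod `3` in `{-1, 0, 1}`.
def balancedTernaryDigits (n : ℤ) : ℕ → ℤ
  | 0 => (n + 1) % 3 - 1
  | i + 1 => balancedTernaryDigits ((n + 1) / 3) i

lemma abs_balancedTernaryDigits_le_one (n : ℤ) (i : ℕ) : |balancedTernaryDigits n i| ≤ 1 := by
  induction i generalizing n with
  | zero => rw [balancedTernaryDigits, abs_le]; omega
  | succ i ih => exact ih _

lemma balancedTernaryDigits_three_mul_add_zero {q d : ℤ} (hd : |d| ≤ 1) :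
    balancedTernaryDigits (3 * q + d) 0 = d := by
  rw [abs_le] at hd
  rw [balancedTernaryDigits]
  omega

lemma balancedTernaryDigits_three_mul_add_succ {q d : ℤ} (hd : |d| ≤ 1) (i : ℕ) :
    balancedTernaryDigits (3 * q + d) (i + 1) = balancedTernaryDigits q i := by
  rw [abs_le] at hd
  rw [balancedTernaryDigits, show (3 * q + d + 1) / 3 = q by omega]

lemma balancedTernaryDigits_eq_zero_of_natAbs_le {n : ℤ} {i : ℕ} (h : n.natAbs ≤ i) :
    balancedTernaryDigits n i = 0 := by
  induction i generalizing n with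
  | zero => rw [balancedTernaryDigits]; omega
  | succ i ih => exact ih (by omega)

lemma balancedTernaryDigits_zero : balancedTernaryDigits 0 = 0 :=
  funext fun _ => balancedTernaryDigits_eq_zero_of_natAbs_le (Nat.zero_le _)

lemma finite_support_balancedTernaryDigits (n : ℤ) : (support (balancedTernaryDigits n)).Finite :=
  (Set.finite_Iio n.natAbs).subset fun _ hi =>
    not_le.1 fun h => hi (balancedTernaryDigits_eq_zero_of_natAbs_le h)

lemma finsum_balancedTernaryDigits_mul_pow (n : ℤ) :
    ∑ᶠ i, balancedTernaryDigits n i * 3 ^ i = n := by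
  induction n using balanced_ternary_induction with
  | zero => simp [balancedTernaryDigits_zero]
  | step q d hd ih =>
    rw [finsum_mul_pow_eq_add_mul 3 (finite_support_balancedTernaryDigits _),
      balancedTernaryDigits_three_mul_add_zero hd]
    simp only [balancedTernaryDigits_three_mul_add_succ hd, ih]
    ring

lemma eq_balancedTernaryDigits_of_support_subset {N : ℕ} {ε : ℕ → ℤ} (hε : ∀ i, |ε i| ≤ 1)
    (hN : support ε ⊆ Set.Iio N) : ε = balancedTernaryDigits (∑ᶠ i, ε i * 3 ^ i) := by
  induction N generalizing ε with
  | zero =>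
    obtain rfl : ε = 0 := support_eq_empty_iff.1 (Set.subset_empty_iff.1 (by simpa using hN))
    simp [balancedTernaryDigits_zero]
  | succ N ih =>
    have htail := ih (ε := fun i => ε (i + 1)) (fun i => hε _) fun i hi => by
      simpa using hN hi
    rw [finsum_mul_pow_eq_add_mul 3 ((Set.finite_Iio _).subset hN), add_comm]
    funext i
    cases i with
    | zero => rw [balancedTernaryDigits_three_mul_add_zero (hε 0)]
    | succ i => rw [balancedTernaryDigits_three_mul_add_succ (hε 0)]; exact congrFun htail i

lemma eq_balancedTernaryDigits {ε : ℕ → ℤ} (hε : ∀ i, |ε i| ≤ 1) (hfin : (support ε).Finite) :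
    ε = balancedTernaryDigits (∑ᶠ i, ε i * 3 ^ i) := by
  obtain ⟨M, hM⟩ := hfin.bddAbove
  exact eq_balancedTernaryDigits_of_support_subset hε fun i hi => Nat.lt_succ_of_le (hM hi)

noncomputable def balancedTernaryWeight (n : ℤ) : ℤ := ∑ᶠ i, |balancedTernaryDigits n i|

lemma balancedTernaryWeight_zero : balancedTernaryWeight 0 = 0 := by
  simp [balancedTernaryWeight, balancedTernaryDigits_zero]

lemma balancedTernaryWeight_three_mul_add {q d : ℤ} (hd : |d| ≤ 1) :
    balancedTernaryWeight (3 * q + d) = |d| + balancedTernaryWeight q := by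
  have hfin : (support fun i => |balancedTernaryDigits (3 * q + d) i|).Finite :=
    (finite_support_balancedTernaryDigits _).subset fun _ hi => abs_ne_zero.1 hi
  rw [balancedTernaryWeight, finsum_nat_eq_zero_add hfin,
    balancedTernaryDigits_three_mul_add_zero hd]
  simp only [balancedTernaryDigits_three_mul_add_succ hd, balancedTernaryWeight]

lemma balancedTernaryWeight_add_le (n : ℤ) {d : ℤ} (hd : |d| ≤ 1) :
    balancedTernaryWeight (n + d) ≤ balancedTernaryWeight n + 1 := by
  induction n using balanced_ternary_induction generalizing d with
  | zero =>
    have h := balancedTernaryWeight_three_mul_add (q := 0) hd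
    rw [mul_zero, zero_add] at h
    rw [zero_add, h, balancedTernaryWeight_zero]
    linarith [abs_le.1 hd]
  | step q e he ih =>
    rw [balancedTernaryWeight_three_mul_add he]
    by_cases hed : |e + d| ≤ 1
    · rw [add_assoc, balancedTernaryWeight_three_mul_add hed]
      linarith [ih hd, abs_add_le e d]
    · -- a carry: `e = d = ±1`, and `3q + e + d = 3(q + e) - e`
      rw [abs_le] at he hd hed
      have hcarry : |-e| ≤ 1 ∧ 3 * q + e + d = 3 * (q + e) + -e := by
        rw [abs_le]; omega
      rw [hcarry.2, balancedTernaryWeight_three_mul_add hcarry.1, abs_neg]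
      linarith [ih (abs_le.2 he)]

lemma balancedTernaryWeight_add_mul_pow_le (n : ℤ) {d : ℤ} (hd : |d| ≤ 1) (i : ℕ) :
    balancedTernaryWeight (n + d * 3 ^ i) ≤ balancedTernaryWeight n + 1 := by
  induction i generalizing n with
  | zero => simpa using balancedTernaryWeight_add_le n hd
  | succ i ih =>
    obtain ⟨q, e, he, rfl⟩ := exists_eq_three_mul_add n
    rw [show 3 * q + e + d * 3 ^ (i + 1) = 3 * (q + d * 3 ^ i) + e by ring,
      balancedTernaryWeight_three_mul_add he, balancedTernaryWeight_three_mul_add he]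
    linarith [ih q]

lemma balancedTernaryWeight_add_le_of_mem_Ag (n : ℤ) {a : ℤ} (ha : a ∈ Ag 3) :
    balancedTernaryWeight (n + a) ≤ balancedTernaryWeight n + 1 := by
  rcases ha with rfl | ⟨i, rfl | rfl⟩
  · rw [add_zero]; linarith
  · simpa using balancedTernaryWeight_add_mul_pow_le n (d := 1) (by norm_num) i
  · simpa [← sub_eq_add_neg] using balancedTernaryWeight_add_mul_pow_le n (d := -1) (by norm_num) i

lemma balancedTernaryWeight_sum_le_length {l : List ℤ} (hl : ∀ a ∈ l, a ∈ Ag 3) :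
    balancedTernaryWeight l.sum ≤ l.length := by
  induction l with
  | nil => simp [balancedTernaryWeight_zero]
  | cons a l ih =>
    rw [List.sum_cons, add_comm, List.length_cons, Nat.cast_succ]
    linarith [balancedTernaryWeight_add_le_of_mem_Ag l.sum (hl a List.mem_cons_self),
      ih fun b hb => hl b (List.mem_cons_of_mem a hb)]

lemma lg_three_le_balancedTernaryWeight (n : ℤ) : (lg 3 n : ℤ) ≤ balancedTernaryWeight n := by
  induction n using balanced_ternary_induction with
  | zero => simpa [balancedTernaryWeight_zero] using lg_le_natAbs (g := 3) 0
  | step q d hd ih =>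
    rw [balancedTernaryWeight_three_mul_add hd, Int.abs_eq_natAbs]
    have := (lg_add_le (g := 3) (3 * q) d).trans (add_le_add (lg_mul_le q) (lg_le_natAbs d))
    omega

lemma lg_three_eq_balancedTernaryWeight (n : ℤ) : (lg 3 n : ℤ) = balancedTernaryWeight n := by
  obtain ⟨l, hl, rfl, hlen⟩ := exists_list_Ag_sum_eq_length_eq_lg (g := 3) n
  exact (lg_three_le_balancedTernaryWeight _).antisymm
    (hlen ▸ balancedTernaryWeight_sum_le_length hl)

theorem stmt11 (n : ℤ) :
    (∃! ε : ℕ → ℤ,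
      (∀ i, |ε i| ≤ 1) ∧
      (Set.Finite {i | ε i ≠ 0}) ∧
      n = ∑ᶠ i, ε i * 3 ^ i) ∧
    (∀ ε : ℕ → ℤ,
      (∀ i, |ε i| ≤ 1) →
      (Set.Finite {i | ε i ≠ 0}) →
      n = ∑ᶠ i, ε i * 3 ^ i →
      (lg 3 n : ℤ) = ∑ᶠ i, |ε i|) := by
  refine ⟨⟨balancedTernaryDigits n, ⟨abs_balancedTernaryDigits_le_one n,
    finite_support_balancedTernaryDigits n, (finsum_balancedTernaryDigits_mul_pow n).symm⟩, ?_⟩, ?_⟩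
  · rintro ε ⟨hε, hfin, rfl⟩
    exact eq_balancedTernaryDigits hε hfin
  · rintro ε hε hfin rfl
    rw [lg_three_eq_balancedTernaryWeight, balancedTernaryWeight,
      ← eq_balancedTernaryDigits hε hfin]
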